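/- (Pressure part of Theorem 1(ii).) Let γ > 1, ε > 0, let I ⊂ ℝ be a compact interval of positive length, and let w_h : I → ℝ³ be continuous with ρ_h(x) > 0 for all x ∈ I. Suppose the average w̄_h satisfies ρ̄_h > 0 and p(w̄_h) > ε, and that p_min := min_{x∈I} p(w_h(x)) < p(w̄_h). Set θ₂ = (p(w̄_h) − ε)/(p(w̄_h) − p_min). Then for every θ with 0 ≤ θ ≤ min{1, θ₂}, the reconstruction w̃_h(x) = θ·w_h(x) + (1 − θ)·w̄_h satisfies p(w̃_h(x)) ≥ ε for all x ∈ I. -/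

import Mathlib

open Real MeasureTheory

/-- Pressure of a state `w = (ρ, m, E)` for adiabatic exponent `γ`:
`p(w) = (γ − 1)(E − m²/(2ρ))`. -/
noncomputable def press (γ : ℝ) (w : ℝ × ℝ × ℝ) : ℝ :=
  (γ - 1) * (w.2.2 - w.2.1 ^ 2 / (2 * w.1))

/-- Specific entropy `s(w) = log(p(w)/ρ^γ)`. -/
noncomputable def entr (γ : ℝ) (w : ℝ × ℝ × ℝ) : ℝ :=
  Real.log (press γ w / w.1 ^ γ)

/-- `q(w) = (s₀ − s(w))·ρ`. -/
noncomputable def qf (γ s₀ : ℝ) (w : ℝ × ℝ × ℝ) : ℝ :=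
  (s₀ - entr γ w) * w.1
/-!
The pressure is concave on `{ρ > 0}`: the kinetic energy `m²/(2ρ)` is the perspective of a
square, jointly convex by Sedrakyan's (Titu's) inequality. Hence
`p(w̃) ≥ θ p(w_h(x)) + (1 − θ) p(w̄) ≥ θ p_min + (1 − θ) p(w̄)`, and `θ ≤ θ₂` is exactly the
condition making the last expression at least `ε`. As an `sInf`, `p_min` bounds `p ∘ w_h`
from below only because that function is continuous on the compact interval `I`.
-/

theorem sq_add_div_add_le_add_sq_div {x y u v : ℝ} (hu : 0 < u) (hv : 0 < v) :
    (x + y) ^ 2 / (u + v) ≤ x ^ 2 / u + y ^ 2 / v := by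
  simpa [Fin.sum_univ_two] using Finset.sq_sum_div_le_sum_sq_div Finset.univ ![x, y]
    (g := ![u, v]) (by simp [Fin.forall_fin_two, hu, hv])

theorem convex_setOf_fst_pos : Convex ℝ {w : ℝ × ℝ × ℝ | 0 < w.1} :=
  convex_halfSpace_gt (LinearMap.fst ℝ ℝ (ℝ × ℝ)).isLinear 0

theorem concaveOn_press {γ : ℝ} (hγ : 1 ≤ γ) :
    ConcaveOn ℝ {w : ℝ × ℝ × ℝ | 0 < w.1} (press γ) := by
  refine concaveOn_iff_forall_pos.2 ⟨convex_setOf_fst_pos, ?_⟩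
  rintro ⟨ρ₁, m₁, E₁⟩ (hρ₁ : 0 < ρ₁) ⟨ρ₂, m₂, E₂⟩ (hρ₂ : 0 < ρ₂) a b ha hb -
  have hkin := sq_add_div_add_le_add_sq_div (x := a * m₁) (y := b * m₂)
    (mul_pos ha (mul_pos two_pos hρ₁)) (mul_pos hb (mul_pos two_pos hρ₂))
  have h₁ : (a * m₁) ^ 2 / (a * (2 * ρ₁)) = a * (m₁ ^ 2 / (2 * ρ₁)) := by field_simp
  have h₂ : (b * m₂) ^ 2 / (b * (2 * ρ₂)) = b * (m₂ ^ 2 / (2 * ρ₂)) := by field_simp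
  rw [h₁, h₂, show a * (2 * ρ₁) + b * (2 * ρ₂) = 2 * (a * ρ₁ + b * ρ₂) by ring] at hkin
  simp only [press, Prod.smul_mk, Prod.mk_add_mk, smul_eq_mul]
  nlinarith [mul_le_mul_of_nonneg_left hkin (sub_nonneg.2 hγ)]

theorem ContinuousOn.press {X : Type*} [TopologicalSpace X] {γ : ℝ} {w : X → ℝ × ℝ × ℝ}
    {s : Set X} (hw : ContinuousOn w s) (hρ : ∀ x ∈ s, 0 < (w x).1) :
    ContinuousOn (fun x => press γ (w x)) s :=
  continuousOn_const.mul <| hw.snd.snd.sub <|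
    (hw.snd.fst.pow 2).div (continuousOn_const.mul hw.fst) fun x hx => by
      have := hρ x hx; positivity

theorem le_convex_comb_of_le_div {ε p pmin pbar θ : ℝ} (hθ : 0 ≤ θ) (hp : pmin ≤ p)
    (hpbar : pmin < pbar) (hθ₂ : θ ≤ (pbar - ε) / (pbar - pmin)) :
    ε ≤ θ * p + (1 - θ) * pbar := by
  rw [le_div_iff₀ (sub_pos.2 hpbar)] at hθ₂
  nlinarith [mul_le_mul_of_nonneg_left hp hθ]

theorem limited_pressure_bound_general (γ ε a b : ℝ) (hγ : 1 < γ)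
    (wh : ℝ → ℝ × ℝ × ℝ) (hwc : ContinuousOn wh (Set.Icc a b))
    (hρ : ∀ x ∈ Set.Icc a b, 0 < (wh x).1)
    (wbar : ℝ × ℝ × ℝ)
    (hρbar : 0 < wbar.1)
    (pmin θ₂ : ℝ)
    (hpmin : pmin = sInf ((fun x => press γ (wh x)) '' Set.Icc a b))
    (h2 : pmin < press γ wbar)
    (hθ₂ : θ₂ = (press γ wbar - ε) / (press γ wbar - pmin))
    (θ : ℝ) (hθ0 : 0 ≤ θ) (hθ : θ ≤ min 1 θ₂) :
    ∀ x ∈ Set.Icc a b, ε ≤ press γ (θ • wh x + (1 - θ) • wbar) := by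
  intro x hx
  have hpmin_le : pmin ≤ press γ (wh x) :=
    hpmin ▸ csInf_le (isCompact_Icc.bddBelow_image (hwc.press hρ)) ⟨x, hx, rfl⟩
  calc ε ≤ θ * press γ (wh x) + (1 - θ) * press γ wbar :=
        le_convex_comb_of_le_div hθ0 hpmin_le h2 (hθ₂ ▸ hθ.trans (min_le_right _ _))
    _ ≤ press γ (θ • wh x + (1 - θ) • wbar) :=
        (concaveOn_press hγ.le).2 (hρ x hx) hρbar hθ0
          (sub_nonneg.2 (hθ.trans (min_le_left _ _))) (add_sub_cancel θ 1)

/-- Pressure part of Theorem 1(ii): Under positivity of the density along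
the cell, with `p(w̄_h) > ε` and `p_min < p(w̄_h)`, setting
`θ₂ = (p(w̄_h) − ε)/(p(w̄_h) − p_min)`, the reconstruction
`w̃_h(x) = θ·w_h(x) + (1 − θ)·w̄_h` satisfies `p(w̃_h(x)) ≥ ε` on `I` whenever
`0 ≤ θ ≤ min{1, θ₂}`. -/
theorem limited_pressure_bound (γ ε a b : ℝ) (hγ : 1 < γ) (hε : 0 < ε) (hab : a < b)
    (wh : ℝ → ℝ × ℝ × ℝ) (hwc : ContinuousOn wh (Set.Icc a b))
    (hρ : ∀ x ∈ Set.Icc a b, 0 < (wh x).1)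
    (wbar : ℝ × ℝ × ℝ) (hwbar : wbar = (b - a)⁻¹ • ∫ x in a..b, wh x)
    (hρbar : 0 < wbar.1)
    (pmin θ₂ : ℝ)
    (hpmin : pmin = sInf ((fun x => press γ (wh x)) '' Set.Icc a b))
    (h1 : ε < press γ wbar) (h2 : pmin < press γ wbar)
    (hθ₂ : θ₂ = (press γ wbar - ε) / (press γ wbar - pmin))
    (θ : ℝ) (hθ0 : 0 ≤ θ) (hθ : θ ≤ min 1 θ₂) :
    ∀ x ∈ Set.Icc a b, ε ≤ press γ (θ • wh x + (1 - θ) • wbar) :=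
  limited_pressure_bound_general γ ε a b hγ wh hwc hρ wbar hρbar pmin θ₂ hpmin h2 hθ₂ θ hθ0 hθ
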